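/- For a nonzero real number a, define the operator C_a on functions φ : ℝ → ℂ by (C_a φ)(x) = exp(iπ·(sgn(a)−1)/4) · |a|^{1/2} · φ(a·x). Then for all nonzero reals a, b: C_a ∘ C_b = h(a,b) · C_{a·b}, where h(a,b) = −1 if a < 0 and b < 0, and h(a,b) = 1 otherwise. -/
import Mathlib


/-- The normalized real Bruhat-word operator
`C_a φ(x) = e^{iπ(sgn(a)−1)/4}·|a|^{1/2}·φ(ax)`. -/
noncomputable def Cop (a : ℝ) (φ : ℝ → ℂ) : ℝ → ℂ :=
  fun x => Complex.exp (Real.pi * Complex.I * ((if 0 < a then (1 : ℂ) else -1) - 1) / 4)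
    * (Real.sqrt |a| : ℂ) * φ (a * x)

open Classical in
/-- The real Hilbert symbol: `−1` if both arguments are negative, else `1`. -/
noncomputable def hilbertReal (a b : ℝ) : ℂ :=
  if a < 0 ∧ b < 0 then -1 else 1

lemma exp_sq_neg : Complex.exp (Real.pi * Complex.I * -2 / 4)
    * Complex.exp (Real.pi * Complex.I * -2 / 4) = -1 := by
  rw [← Complex.exp_add,
    show (Real.pi * Complex.I * -2 / 4 + Real.pi * Complex.I * -2 / 4)
      = -(Real.pi * Complex.I) by ring,
    Complex.exp_neg, Complex.exp_pi_mul_I]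
  norm_num

/-- The projective multiplication law of the normalized real Bruhat-word
operators: `C_a ∘ C_b = (a,b)_∞ · C_{ab}`. -/
theorem real_bruhat_projective_law (a b : ℝ) (ha : a ≠ 0) (hb : b ≠ 0) :
    ∀ (φ : ℝ → ℂ) (x : ℝ),
      Cop a (Cop b φ) x = hilbertReal a b * Cop (a * b) φ x := by
  intro φ x
  have harg : b * (a * x) = a * b * x := by ring
  have hsqrt : (Real.sqrt |a * b| : ℂ) = (Real.sqrt |a| : ℂ) * (Real.sqrt |b| : ℂ) := by
    rw [abs_mul, Real.sqrt_mul (abs_nonneg a)]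
    push_cast; ring
  simp only [Cop, hilbertReal, harg, hsqrt]
  rcases lt_or_gt_of_ne ha with ha' | ha' <;> rcases lt_or_gt_of_ne hb with hb' | hb'
  · have hab : 0 < a * b := mul_pos_of_neg_of_neg ha' hb'
    rw [if_neg (not_lt.2 ha'.le), if_neg (not_lt.2 hb'.le), if_pos hab,
      if_pos ⟨ha', hb'⟩, show ((-1 : ℂ) - 1) = -2 by ring, show ((1 : ℂ) - 1) = 0 by ring]
    simp only [mul_zero, zero_div, Complex.exp_zero]
    linear_combination ((Real.sqrt |a| : ℂ) * (Real.sqrt |b| : ℂ) * φ (a * b * x)) * exp_sq_neg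
  · have hab : ¬ 0 < a * b := by
      push_neg; exact mul_nonpos_iff.2 (Or.inr ⟨ha'.le, hb'.le⟩)
    rw [if_neg (not_lt.2 ha'.le), if_pos hb', if_neg hab,
      if_neg (fun h => absurd h.2 (not_lt.2 hb'.le)), show ((1 : ℂ) - 1) = 0 by ring]
    simp only [mul_zero, zero_div, Complex.exp_zero]
    ring
  · have hab : ¬ 0 < a * b := by
      push_neg; exact mul_nonpos_iff.2 (Or.inl ⟨ha'.le, hb'.le⟩)
    rw [if_pos ha', if_neg (not_lt.2 hb'.le), if_neg hab,
      if_neg (fun h => absurd h.1 (not_lt.2 ha'.le)), show ((1 : ℂ) - 1) = 0 by ring]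
    simp only [mul_zero, zero_div, Complex.exp_zero]
    ring
  · have hab : 0 < a * b := mul_pos ha' hb'
    rw [if_pos ha', if_pos hb', if_pos hab,
      if_neg (fun h => absurd h.1 (not_lt.2 ha'.le)), show ((1 : ℂ) - 1) = 0 by ring]
    simp only [mul_zero, zero_div, Complex.exp_zero]
    ring
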